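/- arXiv:1710.10029 — 7 statements merged into one kernel-verified Lean document; each statement's English description precedes it below -/
import Mathlib

section
/- Let A be a commutative ring and I an ideal of A. Then for any b ∈ A, (I +̂ b) ∩ (I : b) ⊆ √I, where (I +̂ b) := ⋂_{a ∈ (I : b^∞)} (I : a^∞). Consequently, if I is radical then I = (I +̂ b) ∩ (I : b). -/
/-!
An element `x` with `x b ∈ I` lies in `(I : b^∞)`, so it is one of the elements `a` cut out
in `(I +̂ b)`; membership in `(I : x^∞)` then says `x^(m+1) ∈ I`. Conversely `I` is contained
in every colon ideal, so for radical `I` the two inclusions meet.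
-/

namespace Ideal

variable {A : Type*} [CommRing A] (I : Ideal A)

/-- The saturation `(I : a^∞)`. -/
def saturation (a : A) : Set A := {x | ∃ m : ℕ, x * a ^ m ∈ I}

/-- The set `(I +̂ b)`. -/
def saturatedSum (b : A) : Set A := ⋂ a ∈ I.saturation b, I.saturation a

variable {I}

theorem mem_saturation_of_mul_mem {x b : A} (h : x * b ∈ I) : x ∈ I.saturation b :=
  ⟨1, by simpa using h⟩

theorem coe_subset_saturation (a : A) : (I : Set A) ⊆ I.saturation a :=
  fun x hx => ⟨0, by simpa using hx⟩

theorem coe_subset_saturatedSum (b : A) : (I : Set A) ⊆ I.saturatedSum b :=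
  Set.subset_iInter₂ fun a _ => coe_subset_saturation a

theorem exists_pow_mem_of_mem_saturation_self {x : A} (h : x ∈ I.saturation x) :
    ∃ n : ℕ, x ^ n ∈ I := by
  obtain ⟨m, hm⟩ := h
  exact ⟨m + 1, by rwa [pow_succ']⟩

theorem saturatedSum_inter_colon_subset_radical (b : A) :
    I.saturatedSum b ∩ {x | x * b ∈ I} ⊆ {x | ∃ n : ℕ, x ^ n ∈ I} := by
  rintro x ⟨hx, hxb⟩
  exact exists_pow_mem_of_mem_saturation_self
    (Set.mem_iInter₂.mp hx x (mem_saturation_of_mul_mem hxb))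

theorem coe_eq_saturatedSum_inter_colon_of_radical_eq (b : A) (hI : I.radical = I) :
    (I : Set A) = I.saturatedSum b ∩ {x | x * b ∈ I} := by
  refine (Set.subset_inter (coe_subset_saturatedSum b) fun x hx => I.mul_mem_right b hx).antisymm
    fun x hx => ?_
  rw [← hI]
  exact saturatedSum_inter_colon_subset_radical b hx

end Ideal

/-- For an ideal `I` of a commutative ring `A` and `b ∈ A`, with
`(I +̂ b) = ⋂_{a ∈ (I : b^∞)} (I : a^∞)`, we have `(I +̂ b) ∩ (I : b) ⊆ √I`;
consequently, if `I` is radical then `I = (I +̂ b) ∩ (I : b)`. -/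
theorem stmt3 {A : Type*} [CommRing A] (I : Ideal A) (b : A) :
    ((⋂ a ∈ {a : A | ∃ n : ℕ, a * b ^ n ∈ I}, {x : A | ∃ m : ℕ, x * a ^ m ∈ I}) ∩
        {x : A | x * b ∈ I} ⊆ {x : A | ∃ n : ℕ, x ^ n ∈ I}) ∧
      (I.radical = I →
        (I : Set A) =
          (⋂ a ∈ {a : A | ∃ n : ℕ, a * b ^ n ∈ I}, {x : A | ∃ m : ℕ, x * a ^ m ∈ I}) ∩
            {x : A | x * b ∈ I}) :=
  ⟨Ideal.saturatedSum_inter_colon_subset_radical b,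
    Ideal.coe_eq_saturatedSum_inter_colon_of_radical_eq b⟩
end

section
/- Let A be a commutative Poisson algebra over a field of characteristic zero and I a Poisson ideal of A. Then the radical √I is a Poisson ideal. -/
/-!
Let `D = {a, ·}`. If `x ^ n ∈ I` and `y = D x`, applying `D` to
`x ^ (m + 1) * y ^ (2 * j) ∈ I` and multiplying by `y` gives
`(m + 1) * x ^ m * y ^ (2 * j + 2) + 2 * j * x ^ (m + 1) * y ^ (2 * j) * D y ∈ I`,
whose second summand already lies in `I`. Dividing by `m + 1` (characteristic zero) trades one
power of `x` for two powers of `y`; after `n` steps `y ^ (2 * n) ∈ I`.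
-/

section Leibniz

variable {A : Type*} [CommRing A] {D : A → A}

theorem map_one_eq_zero_of_leibniz (hD : ∀ b c, D (b * c) = D b * c + b * D c) : D 1 = 0 := by
  have h := hD 1 1
  simp only [mul_one] at h
  linear_combination -h

theorem map_pow_succ_of_leibniz (hD : ∀ b c, D (b * c) = D b * c + b * D c) (w : A) (m : ℕ) :
    D (w ^ (m + 1)) = (m + 1 : ℕ) * (w ^ m * D w) := by
  induction m with
  | zero => simp
  | succ m ih =>
    rw [pow_succ, hD, ih]
    push_cast
    ring

theorem map_pow_mul_self_of_leibniz (hD : ∀ b c, D (b * c) = D b * c + b * D c) (w : A)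
    (m : ℕ) : D (w ^ m) * w = m * (w ^ m * D w) := by
  cases m with
  | zero => simp [map_one_eq_zero_of_leibniz hD]
  | succ m =>
    rw [map_pow_succ_of_leibniz hD, pow_succ]
    push_cast
    ring

variable (hD : ∀ b c, D (b * c) = D b * c + b * D c)
  (hunit : ∀ n : ℕ, n ≠ 0 → IsUnit (n : A)) {I : Ideal A} (hI : ∀ x ∈ I, D x ∈ I)
include hD hunit hI

theorem pow_mul_map_pow_mem_of_leibniz {x : A} {m j : ℕ}
    (h : x ^ (m + 1) * D x ^ (2 * j) ∈ I) : x ^ m * D x ^ (2 * (j + 1)) ∈ I := by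
  have hDy : D (x ^ (m + 1) * D x ^ (2 * j)) * D x
      - (2 * j : ℕ) * (x ^ (m + 1) * D x ^ (2 * j)) * D (D x) ∈ I :=
    I.sub_mem (I.mul_mem_right _ (hI _ h)) (I.mul_mem_right _ (I.mul_mem_left _ h))
  have hexpand : D (x ^ (m + 1) * D x ^ (2 * j)) * D x
      - (2 * j : ℕ) * (x ^ (m + 1) * D x ^ (2 * j)) * D (D x)
      = (m + 1 : ℕ) * (x ^ m * D x ^ (2 * (j + 1))) := by
    rw [hD, add_mul, mul_assoc (x ^ (m + 1)), map_pow_mul_self_of_leibniz hD,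
      map_pow_succ_of_leibniz hD]
    push_cast
    ring
  rw [hexpand] at hDy
  exact (I.unit_mul_mem_iff_mem (hunit _ m.succ_ne_zero)).mp hDy

theorem pow_mul_map_pow_mem_of_pow_add_mem {x : A} (j : ℕ) :
    ∀ m : ℕ, x ^ (m + j) ∈ I → x ^ m * D x ^ (2 * j) ∈ I := by
  induction j with
  | zero => simp
  | succ j ih =>
    intro m hx
    exact pow_mul_map_pow_mem_of_leibniz hD hunit hI (ih (m + 1) (by rwa [add_right_comm]))

theorem map_mem_radical_of_leibniz {x : A} (hx : x ∈ I.radical) : D x ∈ I.radical := by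
  obtain ⟨n, hn⟩ := hx
  refine ⟨2 * n, ?_⟩
  simpa using pow_mul_map_pow_mem_of_pow_add_mem hD hunit hI n 0 (by simpa using hn)

end Leibniz

theorem isUnit_natCast_of_algebra (k : Type*) {A : Type*} [Field k] [CharZero k] [Semiring A]
    [Algebra k A] {n : ℕ} (hn : n ≠ 0) : IsUnit (n : A) := by
  simpa using (IsUnit.mk0 (n : k) (Nat.cast_ne_zero.mpr hn)).map (algebraMap k A)

theorem stmt6_general {k A : Type*} [Field k] [CharZero k] [CommRing A] [Algebra k A]
    (P : A → A → A)
    (hleib : ∀ a b c : A, P a (b * c) = P a b * c + b * P a c)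
    (I : Ideal A) (hI : ∀ x ∈ I, ∀ a : A, P a x ∈ I) :
    ∀ x ∈ I.radical, ∀ a : A, P a x ∈ I.radical :=
  fun _ hx a => map_mem_radical_of_leibniz (hleib a)
    (fun _ hn => isUnit_natCast_of_algebra k hn) (fun x hx => hI x hx a) hx

/-- If `A` is a commutative Poisson algebra over a characteristic-zero field `k`
and `I` is a Poisson ideal of `A`, then the radical `√I` is a Poisson ideal. -/
theorem stmt6 {k A : Type*} [Field k] [CharZero k] [CommRing A] [Algebra k A]
    (P : A → A → A)
    (hlin₁ : ∀ a : A, IsLinearMap k (P a))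
    (hlin₂ : ∀ b : A, IsLinearMap k (fun a => P a b))
    (hanti : ∀ a b : A, P a b = -P b a)
    (hjac : ∀ a b c : A, P a (P b c) = P (P a b) c + P b (P a c))
    (hleib : ∀ a b c : A, P a (b * c) = P a b * c + b * P a c)
    (I : Ideal A) (hI : ∀ x ∈ I, ∀ a : A, P a x ∈ I) :
    ∀ x ∈ I.radical, ∀ a : A, P a x ∈ I.radical :=
  stmt6_general (k := k) P hleib I hI
end

section
/- Let A be a commutative Poisson algebra over a field of characteristic zero and I a Poisson ideal of A. Then every prime ideal of A that is minimal over I is a Poisson ideal. -/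
/-! If `x ∈ p` with `p` minimal over `I`, localizing at `p` gives `s * x ^ n ∈ I` with `s ∉ p`.
Applying a Leibniz map `D` that preserves `I` and multiplying by `s` yields
`s * s * n * x ^ (n - 1) * D x ∈ I`, and `n` is invertible in characteristic zero. So if
`D x ∉ p`, then `s * s * D x ∉ p` is a multiplier with a smaller exponent; descending to
`n = 0` puts an element outside `p` into `I ⊆ p`. -/

theorem Ideal.exists_mul_pow_mem_of_mem_minimalPrimes {A : Type*} [CommRing A]
    {I p : Ideal A} (hp : p ∈ I.minimalPrimes) {x : A} (hx : x ∈ p) :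
    ∃ s ∉ p, ∃ n : ℕ, s * x ^ n ∈ I := by
  have := hp.isPrime
  have hrad := IsLocalization.AtPrime.radical_map_of_mem_minimalPrimes
    (Localization.AtPrime p) p I hp
  obtain ⟨n, hn⟩ : algebraMap A (Localization.AtPrime p) x ∈ (I.map _).radical :=
    hrad ▸ Ideal.mem_map_of_mem _ hx
  rw [← map_pow, IsLocalization.algebraMap_mem_map_algebraMap_iff p.primeCompl] at hn
  obtain ⟨s, hs, hsx⟩ := hn
  exact ⟨s, hs, n, hsx⟩

section Leibniz

variable {A : Type*} {D : A → A}

theorem apply_pow_succ_of_leibniz [CommSemiring A]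
    (hD : ∀ b c, D (b * c) = D b * c + b * D c) (x : A) (n : ℕ) :
    D (x ^ (n + 1)) = (n + 1 : ℕ) * (x ^ n * D x) := by
  induction n with
  | zero => simp
  | succ n ih =>
    rw [pow_succ, hD, ih]
    push_cast
    ring

variable [CommRing A] (hD : ∀ b c, D (b * c) = D b * c + b * D c)
  {I : Ideal A} (hI : ∀ y ∈ I, D y ∈ I)
include hD hI

theorem mul_self_mul_apply_mem_of_mul_mem {s y : A} (hsy : s * y ∈ I) : s * s * D y ∈ I := by
  have key : s * s * D y = s * D (s * y) - D s * (s * y) := by rw [hD]; ring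
  rw [key]
  exact I.sub_mem (I.mul_mem_left s (hI _ hsy)) (I.mul_mem_left _ hsy)

theorem apply_mem_of_mem_minimalPrimes (k : Type*) [Field k] [CharZero k] [Algebra k A]
    {p : Ideal A} (hp : p ∈ I.minimalPrimes) {x : A} (hx : x ∈ p) : D x ∈ p := by
  have hprime := hp.isPrime
  by_contra hDx
  obtain ⟨s, hs, n, hsx⟩ := Ideal.exists_mul_pow_mem_of_mem_minimalPrimes hp hx
  induction n generalizing s with
  | zero => exact hs (hp.1.2 (by simpa using hsx))
  | succ n ih =>
    have hunit : IsUnit ((n + 1 : ℕ) : A) := by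
      simpa using ((Nat.cast_ne_zero (R := k)).mpr n.succ_ne_zero).isUnit.map (algebraMap k A)
    have hmem := mul_self_mul_apply_mem_of_mul_mem hD hI hsx
    rw [apply_pow_succ_of_leibniz hD, mul_left_comm, I.unit_mul_mem_iff_mem hunit] at hmem
    refine ih (s * s * D x) ?_ (by rwa [mul_assoc, mul_comm (D x)])
    exact hprime.mul_notMem (hprime.mul_notMem hs hs) hDx

end Leibniz

theorem stmt7_general {k A : Type*} [Field k] [CharZero k] [CommRing A] [Algebra k A]
    (P : A → A → A)
    (hleib : ∀ a b c : A, P a (b * c) = P a b * c + b * P a c)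
    (I : Ideal A) (hI : ∀ x ∈ I, ∀ a : A, P a x ∈ I) :
    ∀ p ∈ I.minimalPrimes, ∀ x ∈ p, ∀ a : A, P a x ∈ p :=
  fun _ hp _ hx a => apply_mem_of_mem_minimalPrimes (hleib a) (fun y hy => hI y hy a) k hp hx

/-- If `A` is a commutative Poisson algebra over a characteristic-zero field `k`
and `I` is a Poisson ideal of `A`, then every minimal prime over `I` is a Poisson
ideal. -/
theorem stmt7 {k A : Type*} [Field k] [CharZero k] [CommRing A] [Algebra k A]
    (P : A → A → A)
    (hlin₁ : ∀ a : A, IsLinearMap k (P a))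
    (hlin₂ : ∀ b : A, IsLinearMap k (fun a => P a b))
    (hanti : ∀ a b : A, P a b = -P b a)
    (hjac : ∀ a b c : A, P a (P b c) = P (P a b) c + P b (P a c))
    (hleib : ∀ a b c : A, P a (b * c) = P a b * c + b * P a c)
    (I : Ideal A) (hI : ∀ x ∈ I, ∀ a : A, P a x ∈ I) :
    ∀ p ∈ I.minimalPrimes, ∀ x ∈ p, ∀ a : A, P a x ∈ p :=
  stmt7_general (k := k) P hleib I hI
end

section
/- Every nonzero Lie ideal of the positive Witt algebra W₊ contains some basis element e_n, and hence has finite codimension in W₊. In particular, W₊ is noetherian as a module over itself. -/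
/-!
If `x ≠ 0` lies in a Lie ideal `I` and `e_a` occurs in `x`, then `[e_a, x]` also lies in `I`:
it loses the `e_a`-term, and every other term `c e_b` becomes `(b - a) c e_{a+b}`, so its
support is strictly smaller. An element of `I` of minimal support is therefore killed by
`ad e_a`, which in characteristic zero forces it to be a multiple of `e_a`. Once `e_n ∈ I`,
the brackets `[e_d, e_n] = (n - d) e_{d+n}` with `d ≠ n` give `e_m ∈ I` for all `m > 2n`, so
`I` has finite codimension. Ideals containing a fixed `I ≠ ⊥` are then subspaces of the
finite-dimensional space `L / I`, which gives the ascending chain condition.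
-/

theorem Module.Basis.finite_quotient_of_finite_setOf_notMem {ι R M : Type*} [Ring R]
    [AddCommGroup M] [Module R M] (E : Module.Basis ι R M) {p : Submodule R M}
    (h : {i | E i ∉ p}.Finite) : Module.Finite R (M ⧸ p) := by
  refine Module.finite_def.2 ?_
  suffices hspan : Submodule.span R (p.mkQ ∘ E '' {i | E i ∉ p}) = ⊤ by
    exact hspan ▸ Submodule.fg_span (h.image _)
  rw [eq_top_iff, ← LinearMap.range_eq_top.2 p.mkQ_surjective, LinearMap.range_eq_map,
    ← E.span_eq, Submodule.map_span, Submodule.span_le]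
  rintro _ ⟨_, ⟨i, rfl⟩, rfl⟩
  by_cases hi : E i ∈ p
  · simp [(Submodule.Quotient.mk_eq_zero p).2 hi]
  · exact Submodule.subset_span ⟨i, hi, rfl⟩

theorem wellFoundedGT_of_forall_ne_bot_Ici {α : Type*} [PartialOrder α] [OrderBot α]
    (h : ∀ a : α, a ≠ ⊥ → WellFoundedGT (Set.Ici a)) : WellFoundedGT α := by
  have acc_of_ne_bot (a : α) (ha : a ≠ ⊥) (b : Set.Ici a) : Acc (· > ·) (b : α) := by
    have := h a ha
    induction b using WellFoundedGT.induction with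
    | _ b ih => exact ⟨_, fun c hc => ih ⟨c, b.2.trans hc.le⟩ hc⟩
  refine ⟨⟨fun a => ?_⟩⟩
  by_cases ha : a = ⊥
  · exact ⟨_, fun c hc => acc_of_ne_bot c (ha ▸ hc).ne_bot ⟨c, le_rfl⟩⟩
  · exact acc_of_ne_bot a ha ⟨a, le_rfl⟩

theorem LieSubmodule.wellFoundedGT_Ici_of_isNoetherian_quotient {R L M : Type*} [CommRing R]
    [LieRing L] [AddCommGroup M] [Module R M] [LieRingModule L M]
    (N : LieSubmodule R L M) [IsNoetherian R (M ⧸ N.toSubmodule)] :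
    WellFoundedGT (Set.Ici N) := by
  let f : Set.Ici N → Set.Ici N.toSubmodule := fun N' => ⟨N'.1.toSubmodule, N'.2⟩
  have hf : StrictMono f := fun _ _ h => h
  exact ((Submodule.comapMkQRelIso _).symm.strictMono.comp hf).wellFoundedGT

section WittBasis

variable {k L : Type*} [Field k] [LieRing L] [LieAlgebra k L]

def IsWittBasis (E : Module.Basis ℕ+ k L) : Prop :=
  ∀ i j : ℕ+, ⁅E i, E j⁆ = (((j : ℕ) : k) - ((i : ℕ) : k)) • E (i + j)

namespace IsWittBasis

variable {E : Module.Basis ℕ+ k L} (hE : IsWittBasis E)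
include hE

theorem repr_lie_apply_add (a b : ℕ+) (x : L) :
    E.repr ⁅E a, x⁆ (a + b) = (((b : ℕ) : k) - ((a : ℕ) : k)) * E.repr x b := by
  induction E.mem_span x using Submodule.span_induction with
  | mem _ hx =>
    obtain ⟨i, rfl⟩ := hx
    rw [hE, map_smul, Finsupp.smul_apply, E.repr_self, E.repr_self]
    by_cases hib : i = b <;> simp [hib]
  | zero => simp
  | add x y _ _ hx hy => simp [hx, hy, mul_add]
  | smul c x _ hx => simp [hx, mul_left_comm]

theorem repr_lie_apply_of_le {a j : ℕ+} (hj : j ≤ a) (x : L) : E.repr ⁅E a, x⁆ j = 0 := by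
  induction E.mem_span x using Submodule.span_induction with
  | mem _ hx =>
    obtain ⟨i, rfl⟩ := hx
    have hne : a + i ≠ j := (hj.trans_lt (PNat.lt_add_right a i)).ne'
    simp [hE a i, E.repr_self, hne]
  | zero => simp
  | add x y _ _ hx hy => simp [hx, hy]
  | smul c x _ hx => simp [hx]

theorem card_support_repr_lie_lt {a : ℕ+} {x : L} (ha : a ∈ (E.repr x).support) :
    (E.repr ⁅E a, x⁆).support.card < (E.repr x).support.card := by
  have hsub : (E.repr ⁅E a, x⁆).support ⊆ ((E.repr x).support.erase a).image (a + ·) := by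
    intro j hj
    rw [Finsupp.mem_support_iff] at hj
    have haj : a < j := lt_of_not_ge fun h => hj (hE.repr_lie_apply_of_le h x)
    obtain ⟨b, rfl⟩ : ∃ b, j = a + b := ⟨j - a, (PNat.add_sub_of_lt haj).symm⟩
    rw [hE.repr_lie_apply_add] at hj
    have hba : b ≠ a := by rintro rfl; simp at hj
    exact Finset.mem_image_of_mem _
      (Finset.mem_erase.2 ⟨hba, Finsupp.mem_support_iff.2 (right_ne_zero_of_mul hj)⟩)
  calc _ ≤ _ := Finset.card_le_card hsub
    _ ≤ _ := Finset.card_image_le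
    _ < _ := Finset.card_erase_lt_of_mem ha

theorem eq_smul_of_lie_eq_zero [CharZero k] {a : ℕ+} {x : L} (h : ⁅E a, x⁆ = 0) :
    x = E.repr x a • E a := by
  have hrepr : E.repr x = Finsupp.single a (E.repr x a) := by
    ext b
    by_cases hba : b = a
    · simp [hba]
    · have hcoeff := hE.repr_lie_apply_add a b x
      rw [h, map_zero, Finsupp.zero_apply, eq_comm, mul_eq_zero,
        sub_eq_zero, Nat.cast_inj, PNat.coe_inj] at hcoeff
      rw [Finsupp.single_eq_of_ne hba, hcoeff.resolve_left hba]
  conv_lhs => rw [← E.repr.symm_apply_apply x, hrepr, E.repr_symm_single]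

theorem exists_basis_mem [CharZero k] {I : LieIdeal k L} (hI : I ≠ ⊥) : ∃ n, E n ∈ I := by
  obtain ⟨x, hx, hx0⟩ := (Submodule.ne_bot_iff _).1 (mt (I.toSubmodule_eq_bot).1 hI)
  induction hcard : (E.repr x).support.card using Nat.strong_induction_on generalizing x with
  | _ N ih =>
    obtain ⟨a, ha⟩ : (E.repr x).support.Nonempty := by simpa using hx0
    by_cases hlie : ⁅E a, x⁆ = 0
    · refine ⟨a, ?_⟩
      rw [hE.eq_smul_of_lie_eq_zero hlie] at hx
      exact (I.toSubmodule.smul_mem_iff (Finsupp.mem_support_iff.1 ha)).1 hx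
    · exact ih _ (hcard ▸ hE.card_support_repr_lie_lt ha) _ (lie_mem_right k L I _ _ hx) hlie rfl

theorem basis_mem_of_two_mul_lt [CharZero k] {I : LieIdeal k L} {n m : ℕ+} (hn : E n ∈ I)
    (hm : 2 * n < m) : E m ∈ I := by
  replace hm : 2 * (n : ℕ) < m := by exact_mod_cast PNat.coe_lt_coe _ _ |>.2 hm
  obtain ⟨d, rfl⟩ : ∃ d, m = d + n :=
    ⟨m - n, (PNat.sub_add_of_lt ((PNat.coe_lt_coe _ _).1 (by omega))).symm⟩
  have hdn : ((n : ℕ) : k) - ((d : ℕ) : k) ≠ 0 := by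
    rw [sub_ne_zero, Ne, Nat.cast_inj, PNat.coe_inj]
    rintro rfl
    simp at hm
    omega
  have hmem := lie_mem_right k L I (E d) _ hn
  rw [hE] at hmem
  exact (I.toSubmodule.smul_mem_iff hdn).1 hmem

theorem finiteDimensional_quotient [CharZero k] {I : LieIdeal k L} (hI : I ≠ ⊥) :
    FiniteDimensional k (L ⧸ I.toSubmodule) := by
  obtain ⟨n, hn⟩ := hE.exists_basis_mem hI
  refine E.finite_quotient_of_finite_setOf_notMem ((Set.finite_Iic (2 * n)).subset fun m hm => ?_)
  exact not_lt.1 fun h => hm (hE.basis_mem_of_two_mul_lt hn h)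

end IsWittBasis

end WittBasis

/-- Every nonzero Lie ideal of the positive Witt algebra (a Lie algebra over a
characteristic-zero field with basis `e_n`, `n ≥ 1`, and `[e_i, e_j] = (j-i)e_{i+j}`)
contains some basis element `e_n`, and hence has finite codimension.  In particular
the lattice of Lie ideals satisfies the ascending chain condition. -/
theorem stmt8 {k L : Type*} [Field k] [CharZero k] [LieRing L] [LieAlgebra k L]
    (E : Module.Basis ℕ+ k L)
    (hE : ∀ i j : ℕ+, ⁅E i, E j⁆ = (((j : ℕ) : k) - ((i : ℕ) : k)) • E (i + j)) :
    (∀ 𝔩 : LieIdeal k L, 𝔩 ≠ ⊥ →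
      (∃ n : ℕ+, E n ∈ 𝔩) ∧ FiniteDimensional k (L ⧸ 𝔩.toSubmodule)) ∧
    WellFoundedGT (LieIdeal k L) := by
  have hW : IsWittBasis E := hE
  refine ⟨fun I hI => ⟨hW.exists_basis_mem hI, hW.finiteDimensional_quotient hI⟩,
    wellFoundedGT_of_forall_ne_bot_Ici fun I hI => ?_⟩
  have := hW.finiteDimensional_quotient hI
  exact I.wellFoundedGT_Ici_of_isNoetherian_quotient
end

section
/- Let A be a commutative algebra and (0) ⊆ I₁ ⊆ I₂ ⊆ ... a chain of radical ideals of A such that (a) the Krull dimension of A/I₁ is finite, and (b) for each j, the ideal I_j has only finitely many minimal primes in A. Then the chain stabilises: I_{j+1} = I_j for all sufficiently large j. -/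
/-!
A radical ideal is the intersection of its minimal primes, so it suffices that the sets `M j` of
minimal primes of `I j`, viewed in `Spec A`, stabilise. They are finite antichains, every member
of `M (j + 1)` lies above a member of `M j`, and all coheights are at most `d ≥ dim A/I₀`.
By downward induction on `k`, the members of coheight `≥ k` stabilise: once those of coheight
`> k` are fixed, a member `q` of `M (j + 1)` of coheight `k` lies above some `p ∈ M j`; if
`p < q`, then `p` has coheight `> k`, so it also lies in `M (j + 1)`, contradicting the antichain
property. Hence the coheight-`k` parts eventually form a decreasing chain of finite sets.
-/

open Filter Order

section

variable {α : Type*}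

theorem Set.eventuallyConst_of_eventually_succ_subset {T : ℕ → Set α}
    (hfin : ∀ j, (T j).Finite) (hT : ∀ᶠ j in atTop, T (j + 1) ⊆ T j) :
    EventuallyConst T atTop := by
  obtain ⟨N, hN⟩ := eventually_atTop.1 hT
  let F : ℕ → Finset α := fun i ↦ (hfin (N + i)).toFinset
  have hF : Antitone F := antitone_nat_of_succ_le fun i ↦ by
    simpa [F, ← add_assoc] using hN (N + i) (Nat.le_add_right N i)
  obtain ⟨n, hn⟩ := WellFoundedLT.antitone_chain_condition hF
  refine eventuallyConst_atTop.2 ⟨N + n, fun j hj ↦ ?_⟩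
  obtain ⟨i, rfl⟩ := Nat.exists_eq_add_of_le hj
  simpa [F, add_assoc] using (hn (n + i) (Nat.le_add_right n i)).symm

variable [PartialOrder α] {M : ℕ → Set α}

theorem eventually_coheight_eq_succ_subset (hanti : ∀ j, IsAntichain (· ≤ ·) (M j))
    (hstep : ∀ j, ∀ q ∈ M (j + 1), ∃ p ∈ M j, p ≤ q) (k : ℕ)
    (hk : EventuallyConst (fun j ↦ {p ∈ M j | k < coheight p}) atTop) :
    ∀ᶠ j in atTop, {p ∈ M (j + 1) | coheight p = k} ⊆ {p ∈ M j | coheight p = k} := by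
  obtain ⟨N, hN⟩ := eventuallyConst_atTop_nat.1 hk
  refine eventually_atTop.2 ⟨N, fun j hj q ⟨hq, hqk⟩ ↦ ?_⟩
  obtain ⟨p, hp, hpq⟩ := hstep j q hq
  obtain rfl | hlt := hpq.eq_or_lt
  · exact ⟨hp, hqk⟩
  have hkp : (k : ℕ∞) < coheight p :=
    hqk ▸ coheight_strictAnti hlt (hqk ▸ ENat.natCast_lt_top k)
  have hp' : p ∈ {p ∈ M (j + 1) | k < coheight p} := by
    rw [hN j hj]
    exact ⟨hp, hkp⟩
  exact absurd hpq (hanti (j + 1) hp'.1 hq hlt.ne)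

theorem eventuallyConst_of_isAntichain_of_coheight_le (hfin : ∀ j, (M j).Finite)
    (hanti : ∀ j, IsAntichain (· ≤ ·) (M j))
    (hstep : ∀ j, ∀ q ∈ M (j + 1), ∃ p ∈ M j, p ≤ q) (d : ℕ)
    (hd : ∀ j, ∀ p ∈ M j, coheight p ≤ d) : EventuallyConst M atTop := by
  have key : ∀ k ≤ d + 1,
      EventuallyConst (fun j ↦ {p ∈ M j | (k : ℕ∞) ≤ coheight p}) atTop := by
    intro k hk
    induction hk using Nat.decreasingInduction with
    | self =>
      convert EventuallyConst.const (∅ : Set α) with j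
      refine Set.eq_empty_of_forall_notMem fun p ⟨hp, hdp⟩ ↦ ?_
      exact absurd (hdp.trans (hd j p hp)) (by norm_cast; omega)
    | of_succ k hk ih =>
      have above : EventuallyConst (fun j ↦ {p ∈ M j | k < coheight p}) atTop := by
        simpa only [Nat.cast_add_one, ENat.add_one_le_iff (ENat.natCast_ne_top k)] using ih
      have level : EventuallyConst (fun j ↦ {p ∈ M j | coheight p = k}) atTop :=
        Set.eventuallyConst_of_eventually_succ_subset
          (fun j ↦ (hfin j).subset (Set.sep_subset _ _))
          (eventually_coheight_eq_succ_subset hanti hstep k above)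
      convert above.comp₂ (· ∪ ·) level using 2 with j
      ext p
      simp only [le_iff_lt_or_eq, Set.mem_ofPred_eq, Set.mem_union, eq_comm]
      tauto
  simpa using key 0 (Nat.zero_le _)

end

namespace PrimeSpectrum

variable {A : Type*} [CommRing A]

theorem coheight_le_ringKrullDim_quotient {I : Ideal A} {p : PrimeSpectrum A}
    (hp : I ≤ p.asIdeal) : (coheight p : WithBot ℕ∞) ≤ ringKrullDim (A ⧸ I) := by
  rw [coheight_eq_krullDim_Ici, ringKrullDim_quotient]
  exact krullDim_le_of_strictMono
    (fun q : Set.Ici p ↦ (⟨q.1, hp.trans q.2⟩ : zeroLocus (I : Set A))) fun _ _ h ↦ h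

theorem exists_le_of_asIdeal_mem_minimalPrimes {I J : Ideal A} (hIJ : I ≤ J)
    {q : PrimeSpectrum A} (hq : q.asIdeal ∈ J.minimalPrimes) :
    ∃ p : PrimeSpectrum A, p.asIdeal ∈ I.minimalPrimes ∧ p ≤ q := by
  obtain ⟨p, hp, hpq⟩ := Ideal.exists_minimalPrimes_le (hIJ.trans hq.1.2)
  exact ⟨⟨p, hp.1.1⟩, hp, hpq⟩

theorem radical_eq_of_preimage_minimalPrimes_eq {I J : Ideal A}
    (h : asIdeal ⁻¹' I.minimalPrimes = asIdeal ⁻¹' J.minimalPrimes) :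
    I.radical = J.radical := by
  have range_asIdeal {K : Ideal A} : K.minimalPrimes ⊆ Set.range asIdeal :=
    fun p hp ↦ ⟨⟨p, hp.1.1⟩, rfl⟩
  rw [← Ideal.sInf_minimalPrimes, ← Ideal.sInf_minimalPrimes,
    (Set.preimage_eq_preimage' range_asIdeal range_asIdeal).1 h]

end PrimeSpectrum

/-- Let `A` be a commutative ring and `I₁ ⊆ I₂ ⊆ ⋯` an ascending chain of radical
ideals such that `A/I₁` has finite Krull dimension and each `I_j` has only finitely
many minimal primes.  Then the chain stabilises. -/
theorem stmt14 {A : Type*} [CommRing A] (I : ℕ → Ideal A) (hmono : Monotone I)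
    (hrad : ∀ j, (I j).radical = I j)
    (hdim : ∃ d : ℕ, ringKrullDim (A ⧸ I 0) ≤ (d : ℕ))
    (hmin : ∀ j, (I j).minimalPrimes.Finite) :
    ∃ N : ℕ, ∀ j ≥ N, I j = I N := by
  obtain ⟨d, hd⟩ := hdim
  have hM : EventuallyConst (fun j ↦ PrimeSpectrum.asIdeal ⁻¹' (I j).minimalPrimes) atTop :=
    eventuallyConst_of_isAntichain_of_coheight_le
      (fun j ↦ (hmin j).preimage fun _ _ _ _ ↦ PrimeSpectrum.ext)
      (fun j ↦ (setOfPred_minimal_antichain _).preimage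
        (fun _ _ ↦ PrimeSpectrum.ext) fun _ _ ↦ id)
      (fun j _ hq ↦ PrimeSpectrum.exists_le_of_asIdeal_mem_minimalPrimes (hmono j.le_succ) hq)
      d fun j _ hp ↦ by
        exact_mod_cast (PrimeSpectrum.coheight_le_ringKrullDim_quotient
          ((hmono j.zero_le).trans hp.1.2)).trans hd
  obtain ⟨N, hN⟩ := eventuallyConst_atTop.1 hM
  exact ⟨N, fun j hj ↦ by
    rw [← hrad j, ← hrad N, PrimeSpectrum.radical_eq_of_preimage_minimalPrimes_eq (hN j hj)]⟩
end

section
/- Let k ≤ ℓ be positive integers, and let J(k, ℓ) be the ideal of the polynomial ring k[x₁, x₂, ...] generated by all monomials x_i x_j with i ≥ k and j − i ≥ ℓ − k, where the grading gives x_i degree i. Then the dimension of the degree-n graded component of k[x₁, x₂, ...]/J(k, ℓ) is O(n^{ℓ−1}). -/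
/-!
A monomial outside `J(k, ℓ)` has arbitrary exponents at `x_1, …, x_{k-1}`, but its variables of
index `≥ k` lie in the window `[m, m + ℓ - k)` above the lowest such index `m` (when `ℓ = k` they
consist of `x_m` alone). Hence it is determined by `k - 1` small exponents and the `ℓ - k`
exponents in the window: these fix the weight of the big part, which is `m` times the number of
big variables plus a quantity depending only on the window pattern, and therefore fix `m`. All
these `ℓ - 1` exponents are at most `n`, so there are at most `(n + 1) ^ (ℓ - 1)` standard
monomials of degree `n`, and they span the degree-`n` component of the quotient.
-/

open MvPolynomial Finsupp

namespace Finsupp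

theorem single_add_single_le {α : Type*} {g : α →₀ ℕ} {i j : α} (hij : i ≠ j)
    (hi : g i ≠ 0) (hj : g j ≠ 0) : single i 1 + single j 1 ≤ g := by
  classical
  intro x
  simp only [coe_add, Pi.add_apply, single_apply]
  split_ifs <;> grind

theorem filter_le_self {α : Type*} (g : α →₀ ℕ) (p : α → Prop) [DecidablePred p] :
    g.filter p ≤ g := fun j => by
  rw [filter_apply]
  split_ifs <;> simp

theorem weight_mapDomain_add_left (m : ℕ) (s : ℕ →₀ ℕ) :
    weight id (s.mapDomain (m + ·)) = m * degree s + weight id s := by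
  simp only [weight_apply, degree_apply]
  rw [sum_mapDomain_index (by simp) (by intros; simp [add_mul])]
  simp only [Finsupp.sum, smul_eq_mul, id, Finset.mul_sum, ← Finset.sum_add_distrib]
  exact Finset.sum_congr rfl fun _ _ => by ring

variable {b b' : ℕ →₀ ℕ}

noncomputable def lowest (b : ℕ →₀ ℕ) : ℕ := sInf (b.support : Set ℕ)

noncomputable def shift (b : ℕ →₀ ℕ) : ℕ →₀ ℕ :=
  b.comapDomain (b.lowest + ·) (add_right_injective _).injOn

theorem apply_lowest_ne_zero (hb : b ≠ 0) : b b.lowest ≠ 0 :=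
  mem_support_iff.mp (Nat.sInf_mem (by simpa using hb))

theorem lowest_le {j : ℕ} (hj : b j ≠ 0) : b.lowest ≤ j :=
  Nat.sInf_le (mem_support_iff.mpr hj)

theorem shift_apply (b : ℕ →₀ ℕ) (o : ℕ) : b.shift o = b (b.lowest + o) := rfl

theorem mapDomain_shift (b : ℕ →₀ ℕ) : b.shift.mapDomain (b.lowest + ·) = b :=
  mapDomain_comapDomain _ (add_right_injective _) b fun j hj =>
    ⟨j - b.lowest, by have := lowest_le (mem_support_iff.mp hj); simp only; omega⟩

theorem weight_eq_lowest_mul_degree_shift_add (b : ℕ →₀ ℕ) :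
    weight id b = b.lowest * degree b.shift + weight id b.shift := by
  conv_lhs => rw [← mapDomain_shift b]
  exact weight_mapDomain_add_left _ _

theorem eq_of_shift_eq_of_weight_eq (hb : b ≠ 0) (hs : b.shift = b'.shift)
    (hw : weight id b = weight id b') : b = b' := by
  have hdeg : 0 < degree b.shift :=
    Nat.pos_of_ne_zero (apply_lowest_ne_zero hb) |>.trans_le (le_degree 0 b.shift)
  have hlow : b.lowest = b'.lowest := by
    rw [weight_eq_lowest_mul_degree_shift_add, weight_eq_lowest_mul_degree_shift_add b', ← hs]
      at hw
    exact Nat.eq_of_mul_eq_mul_right hdeg (by omega)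
  calc b = b.shift.mapDomain (b.lowest + ·) := (mapDomain_shift b).symm
    _ = b'.shift.mapDomain (b'.lowest + ·) := by rw [hs, hlow]
    _ = b' := mapDomain_shift b'

theorem lowest_le_weight (hb : b ≠ 0) : b.lowest ≤ weight id b :=
  le_weight_of_ne_zero' id (apply_lowest_ne_zero hb)

theorem weight_id_eq_zero_iff (h0 : b 0 = 0) : weight id b = 0 ↔ b = 0 := by
  refine ⟨fun hw => ?_, fun hb => by rw [hb, map_zero]⟩
  by_contra hb
  have hlow : b.lowest ≠ 0 := fun h => apply_lowest_ne_zero hb (h ▸ h0)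
  have := lowest_le_weight hb
  omega

theorem apply_le_weight_id (h0 : b 0 = 0) (j : ℕ) : b j ≤ weight id b := by
  rcases j with _ | j
  · simp [h0]
  · exact le_weight id (Nat.succ_ne_zero j) b

end Finsupp

section Standard

variable {k ℓ : ℕ}

/-- Exponent vectors, indexed by `ℕ`, of the monomials outside `J(k, ℓ)`. -/
def IsStandard (k ℓ : ℕ) (g : ℕ →₀ ℕ) : Prop :=
  ∀ i j, k ≤ i → i ≤ j → ℓ - k ≤ j - i → ¬single i 1 + single j 1 ≤ g

variable {b b' : ℕ →₀ ℕ}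

theorem IsStandard.mono {g : ℕ →₀ ℕ} (hg : IsStandard k ℓ g) (hbg : b ≤ g) :
    IsStandard k ℓ b :=
  fun i j hki hij hgap hle => hg i j hki hij hgap (hle.trans hbg)

theorem IsStandard.shift_eq_zero (hb : IsStandard k ℓ b) (hk : k ≤ b.lowest) (hb0 : b ≠ 0)
    {o : ℕ} (ho : ℓ - k ≤ o) (ho0 : o ≠ 0) : b.shift o = 0 := by
  by_contra h
  exact hb b.lowest (b.lowest + o) hk (by omega) (by omega)
    (single_add_single_le (by omega) (apply_lowest_ne_zero hb0) h)

theorem IsStandard.shift_zero_eq_one (hb : IsStandard k ℓ b) (hk : k ≤ b.lowest) (hb0 : b ≠ 0)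
    (hℓ : ℓ ≤ k) : b.shift 0 = 1 := by
  have hne := apply_lowest_ne_zero hb0
  have hle := hb _ _ hk le_rfl (by omega)
  rw [← single_add, single_le_iff] at hle
  rw [shift_apply, add_zero]
  omega

theorem IsStandard.shift_eq (hb : IsStandard k ℓ b) (hb' : IsStandard k ℓ b')
    (hk : k ≤ b.lowest) (hk' : k ≤ b'.lowest) (hb0 : b ≠ 0) (hb0' : b' ≠ 0)
    (h : ∀ o < ℓ - k, b.shift o = b'.shift o) : b.shift = b'.shift := by
  ext o
  rcases lt_or_ge o (ℓ - k) with ho | ho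
  · exact h o ho
  rcases eq_or_ne o 0 with rfl | ho0
  · rw [hb.shift_zero_eq_one hk hb0 (by omega), hb'.shift_zero_eq_one hk' hb0' (by omega)]
  · rw [hb.shift_eq_zero hk hb0 ho ho0, hb'.shift_eq_zero hk' hb0' ho ho0]

theorem le_lowest_filter {g : ℕ →₀ ℕ} (hg : g.filter (k ≤ ·) ≠ 0) :
    k ≤ (g.filter (k ≤ ·)).lowest := by
  by_contra h
  exact apply_lowest_ne_zero hg (filter_apply_neg _ _ h)

noncomputable def encode (k ℓ : ℕ) (g : ℕ →₀ ℕ) : (Fin (k - 1) → ℕ) × (Fin (ℓ - k) → ℕ) :=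
  (fun i => g (i + 1), fun o => (g.filter (k ≤ ·)).shift o)

def standardExponents (k ℓ n : ℕ) : Set (ℕ →₀ ℕ) :=
  {g | g 0 = 0 ∧ weight id g = n ∧ IsStandard k ℓ g}

theorem encode_injOn (n : ℕ) : Set.InjOn (encode k ℓ) (standardExponents k ℓ n) := by
  rintro g ⟨hg0, hgw, hgs⟩ g' ⟨hg0', hgw', hgs'⟩ he
  have hsmall : g.filter (¬k ≤ ·) = g'.filter (¬k ≤ ·) := by
    ext j
    simp only [filter_apply]
    split_ifs with hj
    · rfl
    · rcases j with _ | i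
      · rw [hg0, hg0']
      · exact congrFun (congrArg Prod.fst he) ⟨i, by omega⟩
  have hw : weight id (g.filter (k ≤ ·)) = weight id (g'.filter (k ≤ ·)) := by
    rw [← filter_add_filter_not g (k ≤ ·), map_add] at hgw
    rw [← filter_add_filter_not g' (k ≤ ·), map_add, ← hsmall] at hgw'
    omega
  set b := g.filter (k ≤ ·)
  set b' := g'.filter (k ≤ ·)
  have hbig : b = b' := by
    have hb00 : b 0 = 0 := by simp [b, filter_apply, hg0]
    have hb00' : b' 0 = 0 := by simp [b', filter_apply, hg0']
    by_cases hb : b = 0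
    · rw [hb, eq_comm, ← weight_id_eq_zero_iff hb00', ← hw, hb, map_zero]
    have hb' : b' ≠ 0 := by
      rwa [Ne, ← weight_id_eq_zero_iff hb00', ← hw, weight_id_eq_zero_iff hb00]
    refine eq_of_shift_eq_of_weight_eq hb ?_ hw
    exact (hgs.mono (filter_le_self _ _)).shift_eq (hgs'.mono (filter_le_self _ _))
      (le_lowest_filter hb) (le_lowest_filter hb') hb hb'
      fun o ho => congrFun (congrArg Prod.snd he) ⟨o, ho⟩
  rw [← filter_add_filter_not g (k ≤ ·), ← filter_add_filter_not g' (k ≤ ·), hsmall]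
  exact congrArg (· + _) hbig

theorem mapsTo_encode_standardExponents (n : ℕ) :
    Set.MapsTo (encode k ℓ) (standardExponents k ℓ n)
      ((Fintype.piFinset fun _ : Fin (k - 1) => Finset.range (n + 1)) ×ˢ
        (Fintype.piFinset fun _ : Fin (ℓ - k) => Finset.range (n + 1)) : Finset _) := by
  rintro g ⟨hg0, hgw, -⟩
  simp only [encode, Finset.coe_product, Set.mem_prod, Finset.mem_coe, Fintype.mem_piFinset,
    Finset.mem_range, Nat.lt_succ_iff, shift_apply]
  exact ⟨fun i => hgw ▸ apply_le_weight_id hg0 _,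
    fun o => (filter_le_self g _ _).trans (hgw ▸ apply_le_weight_id hg0 _)⟩

theorem finite_standardExponents (n : ℕ) : (standardExponents k ℓ n).Finite :=
  .of_injOn (mapsTo_encode_standardExponents n) (encode_injOn n) (Finset.finite_toSet _)

theorem ncard_standardExponents_le (hk : 1 ≤ k) (hkl : k ≤ ℓ) (n : ℕ) :
    (standardExponents k ℓ n).ncard ≤ (n + 1) ^ (ℓ - 1) := by
  refine (Set.ncard_le_ncard_of_injOn _ (mapsTo_encode_standardExponents n) (encode_injOn n)
    (Finset.finite_toSet _)).trans_eq ?_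
  rw [Set.ncard_coe_finset, Finset.card_product, Fintype.card_piFinset, Fintype.card_piFinset]
  simp only [Finset.card_range, Finset.prod_const, Finset.card_univ, Fintype.card_fin, ← pow_add]
  congr 1
  omega

end Standard

theorem finrank_map_weightedHomogeneousSubmodule_le {σ K M : Type*} [Field K] [AddCommMonoid M]
    (w : σ → M) (n : M) (I : Ideal (MvPolynomial σ K)) (S : Finset (σ →₀ ℕ))
    (hS : ∀ d, weight w d = n → monomial d 1 ∉ I → d ∈ S) :
    Module.finrank K ((weightedHomogeneousSubmodule K w n).map
      (Ideal.Quotient.mkₐ K I).toLinearMap) ≤ S.card := by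
  classical
  set f := (Ideal.Quotient.mkₐ K I).toLinearMap
  have hspan : (weightedHomogeneousSubmodule K w n).map f ≤
      Submodule.span K (S.image fun d => f (monomial d 1) : Set (MvPolynomial σ K ⧸ I)) := by
    rw [weightedHomogeneousSubmodule_eq_finsupp_supported,
      AddMonoidAlgebra.supported_eq_span_single, Submodule.map_span, Submodule.span_le]
    rintro _ ⟨_, ⟨d, hd, rfl⟩, rfl⟩
    by_cases hI : monomial d 1 ∈ I
    · have : f (monomial d 1) = 0 := Ideal.Quotient.eq_zero_iff_mem.mpr hI
      exact this ▸ Submodule.zero_mem _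
    · exact Submodule.subset_span (Finset.mem_image_of_mem _ (hS d hd hI))
  calc _ ≤ _ := Submodule.finrank_mono hspan
    _ ≤ _ := finrank_span_finset_le_card _
    _ ≤ S.card := Finset.card_image_le

noncomputable def gapIdeal (R : Type*) [CommSemiring R] (k ℓ : ℕ) : Ideal (MvPolynomial ℕ+ R) :=
  Ideal.span {m | ∃ i j : ℕ+, k ≤ (i : ℕ) ∧ i ≤ j ∧ ℓ - k ≤ (j : ℕ) - (i : ℕ) ∧ m = X i * X j}

section GapIdeal

variable {R : Type*} [CommSemiring R] {k ℓ : ℕ}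

theorem monomial_mem_gapIdeal {d : ℕ+ →₀ ℕ} {i j : ℕ+} (hki : k ≤ (i : ℕ)) (hij : i ≤ j)
    (hgap : ℓ - k ≤ (j : ℕ) - (i : ℕ)) (hle : single i 1 + single j 1 ≤ d) :
    monomial d (1 : R) ∈ gapIdeal R k ℓ := by
  have hX : X i * X j ∈ gapIdeal R k ℓ := Ideal.subset_span ⟨i, j, hki, hij, hgap, rfl⟩
  refine Ideal.mem_of_dvd _ ?_ hX
  rw [X, X, monomial_mul, monomial_dvd_monomial]
  exact ⟨Or.inr hle, by simp⟩

theorem mapDomain_coe_mem_standardExponents (hk : 1 ≤ k) {d : ℕ+ →₀ ℕ} {n : ℕ}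
    (hw : weight (fun i : ℕ+ => (i : ℕ)) d = n) (hd : monomial d (1 : R) ∉ gapIdeal R k ℓ) :
    d.mapDomain (↑) ∈ standardExponents k ℓ n := by
  refine ⟨mapDomain_of_notMem_range _ _ (by simp), ?_, ?_⟩
  · rw [← hw, weight_apply, weight_apply, sum_mapDomain_index (by simp) (by simp [add_mul])]
    rfl
  · intro i j hki hij hgap hle
    lift i to ℕ+ using by omega
    lift j to ℕ+ using by omega
    rw [← mapDomain_single (f := ((↑) : ℕ+ → ℕ)), ← mapDomain_single (f := ((↑) : ℕ+ → ℕ)),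
      ← mapDomain_add, mapDomain_le_mapDomain_iff_le PNat.coe_injective] at hle
    exact hd (monomial_mem_gapIdeal hki (PNat.coe_le_coe _ _ |>.mp hij) hgap hle)

end GapIdeal

/-- Let `1 ≤ k ≤ ℓ` and let `J(k,ℓ)` be the ideal of `F[x₁, x₂, …]` generated by the
monomials `x_i x_j` with `i ≥ k` and `j - i ≥ ℓ - k` (`i ≤ j`).  Grading by
`d(x_i) = i`, the dimension of the degree-`n` component of `F[x₁, x₂, …]/J(k,ℓ)` is
`O(n^{ℓ-1})`. -/
theorem stmt17 {F : Type*} [Field F] (k ℓ : ℕ) (hk : 1 ≤ k) (hkl : k ≤ ℓ) :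
    ∃ C : ℕ, ∀ n : ℕ, 1 ≤ n →
      Module.finrank F
        ((weightedHomogeneousSubmodule F (fun i : ℕ+ => (i : ℕ)) n).map
          (Ideal.Quotient.mkₐ F
            (Ideal.span {m : MvPolynomial ℕ+ F |
              ∃ i j : ℕ+, k ≤ (i : ℕ) ∧ i ≤ j ∧ ℓ - k ≤ (j : ℕ) - (i : ℕ) ∧
                m = X i * X j})).toLinearMap) ≤ C * n ^ (ℓ - 1) := by
  refine ⟨2 ^ (ℓ - 1), fun n hn => ?_⟩
  set S := {d : ℕ+ →₀ ℕ | weight (fun i : ℕ+ => (i : ℕ)) d = n ∧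
    monomial d (1 : F) ∉ gapIdeal F k ℓ}
  have hmaps : Set.MapsTo (mapDomain (↑)) S (standardExponents k ℓ n) :=
    fun d hd => mapDomain_coe_mem_standardExponents hk hd.1 hd.2
  have hinj : Set.InjOn (mapDomain ((↑) : ℕ+ → ℕ)) S :=
    (mapDomain_injective PNat.coe_injective).injOn
  have hfin : S.Finite := .of_injOn hmaps hinj (finite_standardExponents n)
  calc _ ≤ hfin.toFinset.card := finrank_map_weightedHomogeneousSubmodule_le _ _
        (gapIdeal F k ℓ) _ fun d hd hI => hfin.mem_toFinset.mpr ⟨hd, hI⟩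
    _ = S.ncard := (Set.ncard_eq_toFinset_card S hfin).symm
    _ ≤ (standardExponents k ℓ n).ncard :=
        Set.ncard_le_ncard_of_injOn _ hmaps hinj (finite_standardExponents n)
    _ ≤ (n + 1) ^ (ℓ - 1) := ncard_standardExponents_le hk hkl n
    _ ≤ (2 * n) ^ (ℓ - 1) := Nat.pow_le_pow_left (by omega) _
    _ = 2 ^ (ℓ - 1) * n ^ (ℓ - 1) := mul_pow 2 n (ℓ - 1)
end

section
/- Let Γ = {(i, j) ∈ ℤ² : 1 ≤ i ≤ j} and let Σ be the subsemigroup of ℕ × ℕ generated by (0,1) and (3,3). If M ⊆ Γ is closed under addition by elements of Σ and contains the four elements γ + (0,1), γ + (1,5), γ + (2,4), γ + (3,3) for some γ ∈ Γ, then M contains γ + (0,4) + Γ. -/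
/-!
Every `(i, j)` with `1 ≤ i ≤ j` differs from `(i mod 3, i mod 3)` by an element `(3b, a + 3b)`
of `Σ`, so `(0,4) + (i, j)` is one of `(0,1)`, `(1,5)`, `(2,4)` plus an element of `Σ`,
according to the residue of `i` modulo `3`. Closure of `M` under `Σ` then finishes the proof.
-/

def sigmaSemigroup : Set (ℤ × ℤ) := {q | ∃ a b : ℕ, q = ((3 * b : ℤ), (a + 3 * b : ℤ))}

theorem mk_mem_sigmaSemigroup {x y : ℤ} (hx : 0 ≤ x) (hdvd : 3 ∣ x) (hxy : x ≤ y) :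
    (x, y) ∈ sigmaSemigroup := by
  obtain ⟨b, rfl⟩ := hdvd
  refine ⟨(y - 3 * b).toNat, b.toNat, ?_⟩
  ext <;> simp <;> omega

theorem exists_add_mem_sigmaSemigroup {i j : ℤ} (hi : 1 ≤ i) (hij : i ≤ j) :
    ∃ base ∈ ({(0, 1), (1, 5), (2, 4)} : Set (ℤ × ℤ)), ∃ s ∈ sigmaSemigroup,
      (0, 4) + (i, j) = base + s := by
  have hr : i % 3 = 0 ∨ i % 3 = 1 ∨ i % 3 = 2 := by omega
  rcases hr with h | h | h
  · refine ⟨(0, 1), by simp, (i, j + 3),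
      mk_mem_sigmaSemigroup (by omega) (by omega) (by omega), ?_⟩
    rw [Prod.mk_add_mk, Prod.mk_add_mk, Prod.mk.injEq]; omega
  · refine ⟨(1, 5), by simp, (i - 1, j - 1),
      mk_mem_sigmaSemigroup (by omega) (by omega) (by omega), ?_⟩
    rw [Prod.mk_add_mk, Prod.mk_add_mk, Prod.mk.injEq]; omega
  · refine ⟨(2, 4), by simp, (i - 2, j),
      mk_mem_sigmaSemigroup (by omega) (by omega) (by omega), ?_⟩
    rw [Prod.mk_add_mk, Prod.mk_add_mk, Prod.mk.injEq]; omega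

theorem stmt18_general (Γ : Set (ℤ × ℤ)) (hΓ : Γ = {p : ℤ × ℤ | 1 ≤ p.1 ∧ p.1 ≤ p.2})
    (Sig : Set (ℤ × ℤ)) (hSig : Sig = {q : ℤ × ℤ | ∃ a b : ℕ, q = ((3 * b : ℤ), (a + 3 * b : ℤ))})
    (M : Set (ℤ × ℤ)) (hM : ∀ m ∈ M, ∀ s ∈ Sig, m + s ∈ M)
    (γ : ℤ × ℤ)
    (h1 : γ + (0, 1) ∈ M) (h2 : γ + (1, 5) ∈ M) (h3 : γ + (2, 4) ∈ M) :
    ∀ g ∈ Γ, γ + (0, 4) + g ∈ M := by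
  subst hΓ hSig
  rintro ⟨i, j⟩ ⟨hi, hij⟩
  obtain ⟨base, hbase, s, hs, hsum⟩ := exists_add_mem_sigmaSemigroup hi hij
  rw [add_assoc, hsum, ← add_assoc]
  refine hM _ ?_ s hs
  rcases hbase with rfl | rfl | rfl
  exacts [h1, h2, h3]

/-- Let `Γ = {(i,j) ∈ ℤ² : 1 ≤ i ≤ j}` and `Σ` the subsemigroup of `ℕ × ℕ` generated
by `(0,1)` and `(3,3)`.  If `M ⊆ Γ` is closed under adding elements of `Σ` and
contains `γ + (0,1)`, `γ + (1,5)`, `γ + (2,4)`, `γ + (3,3)` for some `γ ∈ Γ`, then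
`M ⊇ γ + (0,4) + Γ`. -/
theorem stmt18 (Γ : Set (ℤ × ℤ)) (hΓ : Γ = {p : ℤ × ℤ | 1 ≤ p.1 ∧ p.1 ≤ p.2})
    (Sig : Set (ℤ × ℤ)) (hSig : Sig = {q : ℤ × ℤ | ∃ a b : ℕ, q = ((3 * b : ℤ), (a + 3 * b : ℤ))})
    (M : Set (ℤ × ℤ)) (hMΓ : M ⊆ Γ) (hM : ∀ m ∈ M, ∀ s ∈ Sig, m + s ∈ M)
    (γ : ℤ × ℤ) (hγ : γ ∈ Γ)
    (h1 : γ + (0, 1) ∈ M) (h2 : γ + (1, 5) ∈ M) (h3 : γ + (2, 4) ∈ M)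
    (h4 : γ + (3, 3) ∈ M) :
    ∀ g ∈ Γ, γ + (0, 4) + g ∈ M :=
  stmt18_general Γ hΓ Sig hSig M hM γ h1 h2 h3
end
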